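/- For every metric space X with at least two points, ae(X) ≤ 2·(1 − 1/|X|)·(diam X)/(sep X), where sep X is the minimal distance between distinct points (with the conventions a/0 = ∞ and a/∞ = 0). -/

import Mathlib

/-!
Let `s` be the separation and `D` the diameter of `X`, and let `f : X → E` be `L`-Lipschitz.
All values of `f` lie within `(1 - 1/|X|) L D` of a common centre `c`: the average of the values
when `X` is finite, any value otherwise. Tents of height one and radius `s/2` around the points
of `X` have disjoint supports in any `Y ⊇ X`, so `y ↦ c + tent_x(y) (f x - c)`, with `x` the
point whose tent is positive at `y`, is well defined; it extends `f` and is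
`2 (1 - 1/|X|) L D / s`-Lipschitz.
-/

noncomputable section

/-- The Lipschitz constant of a map (infimum of admissible constants). -/
def lipConst {α β : Type*} [PseudoEMetricSpace α] [PseudoEMetricSpace β] (f : α → β) : NNReal :=
  sInf {K : NNReal | LipschitzWith K f}

/-- The absolute extendability constant `ae(X)`: the least `K ≥ 0` such that for every
metric space `Y` containing `X` (isometrically), every Banach space `E`, and every
Lipschitz map `f : X → E`, the map `f` admits a `K·Lip(f)`-Lipschitz extension to `Y`. -/
def aeConst (X : Type) [MetricSpace X] : ℝ :=
  sInf {K : ℝ | 0 ≤ K ∧ ∀ (Y : Type) [MetricSpace Y] (ι : X → Y), Isometry ι →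
    ∀ (E : Type) [NormedAddCommGroup E] [NormedSpace ℝ E] [CompleteSpace E] (f : X → E),
      (∃ L, LipschitzWith L f) →
      ∃ g : Y → E, (∀ x : X, g (ι x) = f x) ∧ LipschitzWith (K.toNNReal * lipConst f) g}

/-- The non-linear extension modulus `ν(X,Y)` for a subset `X ⊆ Y`: the least `K ≥ 0`
such that every Lipschitz map from `X` into any Banach space admits a `K·Lip(f)`-Lipschitz
extension to `Y`. -/
def nuMod (Y : Type) [MetricSpace Y] (X : Set Y) : ℝ :=
  sInf {K : ℝ | 0 ≤ K ∧ ∀ (E : Type) [NormedAddCommGroup E] [NormedSpace ℝ E]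
    [CompleteSpace E] (f : ↥X → E), (∃ L, LipschitzWith L f) →
    ∃ g : Y → E, (∀ x : ↥X, g ↑x = f x) ∧ LipschitzWith (K.toNNReal * lipConst f) g}

end

open scoped NNReal ENNReal

lemma lipschitzWith_lipConst {α β : Type*} [PseudoMetricSpace α] [PseudoMetricSpace β]
    {f : α → β} (hf : ∃ K, LipschitzWith K f) : LipschitzWith (lipConst f) f := by
  have hclosed : IsClosed {K : ℝ≥0 | LipschitzWith K f} := by
    simp only [lipschitzWith_iff_dist_le_mul, Set.ofPred_forall]
    exact isClosed_iInter fun x => isClosed_iInter fun y =>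
      isClosed_le continuous_const (NNReal.continuous_coe.mul continuous_const)
  exact hclosed.csInf_mem hf (OrderBot.bddBelow _)

section Tent

variable {Y : Type*} [PseudoMetricSpace Y] {r : ℝ}

noncomputable def tent (z : Y) (r : ℝ) (y : Y) : ℝ := max (1 - dist y z / r) 0

lemma tent_nonneg (z : Y) (r : ℝ) (y : Y) : 0 ≤ tent z r y := le_max_right _ _

lemma tent_self (z : Y) (r : ℝ) : tent z r z = 1 := by simp [tent]

lemma tent_pos_iff (hr : 0 < r) {z y : Y} : 0 < tent z r y ↔ dist y z < r := by
  simp [tent, div_lt_one hr]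

lemma tent_eq_of_pos (hr : 0 < r) {z y : Y} (h : 0 < tent z r y) :
    tent z r y = 1 - dist y z / r :=
  max_eq_left (sub_nonneg.2 ((div_le_one hr).2 ((tent_pos_iff hr).1 h).le))

lemma abs_tent_sub_tent_le (hr : 0 < r) (z y y' : Y) :
    |tent z r y - tent z r y'| ≤ dist y y' / r :=
  calc |tent z r y - tent z r y'| ≤ |(1 - dist y z / r) - (1 - dist y' z / r)| :=
        abs_max_sub_max_le_abs _ _ _
    _ = |dist y z - dist y' z| / r := by rw [sub_sub_sub_cancel_left, div_sub_div_same, abs_div,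
        abs_of_pos hr, abs_sub_comm]
    _ ≤ dist y y' / r := by gcongr; exact abs_dist_sub_le y y' z

lemma tent_add_tent_le (hr : 0 < r) {z z' y y' : Y} (hzz' : 2 * r ≤ dist z z')
    (hzy' : tent z r y' = 0) (hz'y : tent z' r y = 0) :
    tent z r y + tent z' r y' ≤ dist y y' / r := by
  rcases (tent_nonneg z' r y').eq_or_lt with h' | h'
  · rw [← h', add_zero, ← sub_zero (tent z r y), ← hzy']
    exact (le_abs_self _).trans (abs_tent_sub_tent_le hr z y y')
  rcases (tent_nonneg z r y).eq_or_lt with h | h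
  · rw [← h, zero_add, ← sub_zero (tent z' r y'), ← hz'y, dist_comm]
    exact (le_abs_self _).trans (abs_tent_sub_tent_le hr z' y' y)
  have htri : 2 * r / r ≤ (dist y z + dist y y' + dist y' z') / r := by
    gcongr
    linarith [dist_triangle z y z', dist_triangle y y' z', dist_comm y z]
  rw [mul_div_assoc, div_self hr.ne', add_div, add_div] at htri
  rw [tent_eq_of_pos hr h, tent_eq_of_pos hr h']
  linarith

end Tent

section Extension

variable {X Y E : Type*} [PseudoMetricSpace Y] [NormedAddCommGroup E] [NormedSpace ℝ E]

lemma norm_sub_average_le [Fintype X] (f : X → E) {R : ℝ} (hR : ∀ x x', ‖f x - f x'‖ ≤ R)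
    (x : X) :
    ‖f x - (Fintype.card X : ℝ)⁻¹ • ∑ x', f x'‖ ≤ (1 - (Fintype.card X : ℝ)⁻¹) * R := by
  classical
  set n := Fintype.card X
  have hn : 0 < n := Fintype.card_pos_iff.2 ⟨x⟩
  have hsum : ∑ x', ‖f x - f x'‖ ≤ (n - 1) * R :=
    calc ∑ x', ‖f x - f x'‖ = ∑ x' ∈ Finset.univ.erase x, ‖f x - f x'‖ :=
          (Finset.sum_erase _ (by simp)).symm
      _ ≤ (Finset.univ.erase x).card • R := Finset.sum_le_card_nsmul _ _ _ fun x' _ => hR x x'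
      _ = (n - 1) * R := by
          rw [Finset.card_erase_of_mem (Finset.mem_univ x), Finset.card_univ, nsmul_eq_mul,
            Nat.cast_pred hn]
  have hsmul : f x - (n : ℝ)⁻¹ • ∑ x', f x' = (n : ℝ)⁻¹ • ∑ x', (f x - f x') := by
    rw [Finset.sum_sub_distrib, smul_sub, Finset.sum_const, Finset.card_univ,
      ← Nat.cast_smul_eq_nsmul ℝ, smul_smul, inv_mul_cancel₀ (by positivity), one_smul]
  calc ‖f x - (n : ℝ)⁻¹ • ∑ x', f x'‖ = (n : ℝ)⁻¹ * ‖∑ x', (f x - f x')‖ := by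
        rw [hsmul, norm_smul, norm_inv, Real.norm_natCast]
    _ ≤ (n : ℝ)⁻¹ * ((n - 1) * R) := by gcongr; exact (norm_sum_le _ _).trans hsum
    _ = (1 - (n : ℝ)⁻¹) * R := by field_simp

lemma exists_center_norm_sub_le [Nonempty X] (f : X → E) {R : ℝ}
    (hR : ∀ x x', ‖f x - f x'‖ ≤ R) :
    ∃ c, ∀ x, ‖f x - c‖ ≤ (1 - (ENat.card X : ℝ≥0∞)⁻¹).toReal * R := by
  rcases finite_or_infinite X with hX | hX
  · cases nonempty_fintype X
    have hcard : (1 - (ENat.card X : ℝ≥0∞)⁻¹).toReal = 1 - (Fintype.card X : ℝ)⁻¹ := by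
      have hle : (Fintype.card X : ℝ≥0∞)⁻¹ ≤ 1 :=
        ENNReal.inv_le_one.2 (by exact_mod_cast Fintype.card_pos)
      rw [ENat.card_eq_coe_fintype_card, ENat.toENNReal_coe,
        ENNReal.toReal_sub_of_le hle ENNReal.one_ne_top, ENNReal.toReal_one,
        ENNReal.toReal_inv, ENNReal.toReal_natCast]
    exact ⟨_, fun x => hcard ▸ norm_sub_average_le f hR x⟩
  · obtain ⟨x₀⟩ := ‹Nonempty X›
    exact ⟨f x₀, fun x => by simpa [ENat.card_eq_top_of_infinite] using hR x x₀⟩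

theorem exists_lipschitzWith_extension_of_separated [Nonempty X] (ι : X → Y) {s : ℝ}
    (hs : 0 < s) (hsep : ∀ x x', x ≠ x' → s ≤ dist (ι x) (ι x')) (f : X → E) (c : E) {M : ℝ}
    (hM : ∀ x, ‖f x - c‖ ≤ M) :
    ∃ g : Y → E, (∀ x, g (ι x) = f x) ∧ LipschitzWith (2 * M / s).toNNReal g := by
  set r := s / 2 with hr_def
  have hr : 0 < r := by positivity
  have hM0 : 0 ≤ M := (norm_nonneg _).trans (hM (Classical.arbitrary X))
  have hunique : ∀ {x x' y}, 0 < tent (ι x) r y → 0 < tent (ι x') r y → x = x' := by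
    intro x x' y hx hx'
    rw [tent_pos_iff hr] at hx hx'
    by_contra hne
    linarith [hsep x x' hne, dist_triangle_left (ι x) (ι x') y]
  let p : Y → X := fun y => Classical.epsilon fun x => 0 < tent (ι x) r y
  have hp : ∀ {x y}, 0 < tent (ι x) r y → p y = x :=
    fun h => hunique (Classical.epsilon_spec (p := fun x => 0 < tent (ι x) r _) ⟨_, h⟩) h
  have hp_ne : ∀ {y y'}, p y ≠ p y' → tent (ι (p y)) r y' = 0 := fun hne =>
    (tent_nonneg _ _ _).eq_or_lt.elim Eq.symm fun h => absurd (hp h).symm hne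
  refine ⟨fun y => c + tent (ι (p y)) r y • (f (p y) - c), fun x => ?_,
    LipschitzWith.of_dist_le' fun y y' => ?_⟩
  · dsimp only
    rw [hp (x := x) (by rw [tent_self]; exact one_pos), tent_self, one_smul, add_sub_cancel]
  have hrM : dist y y' / r * M = 2 * M / s * dist y y' := by rw [hr_def]; field_simp
  rw [dist_add_left, dist_eq_norm, ← hrM]
  rcases eq_or_ne (p y) (p y') with hpp | hpp
  · rw [hpp, ← sub_smul, norm_smul, Real.norm_eq_abs]
    exact mul_le_mul (abs_tent_sub_tent_le hr _ y y') (hM _) (norm_nonneg _) (by positivity)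
  calc ‖tent (ι (p y)) r y • (f (p y) - c) - tent (ι (p y')) r y' • (f (p y') - c)‖
      ≤ tent (ι (p y)) r y * M + tent (ι (p y')) r y' * M := by
        refine (norm_sub_le _ _).trans (add_le_add ?_ ?_) <;>
          rw [norm_smul, Real.norm_of_nonneg (tent_nonneg _ _ _)] <;>
          exact mul_le_mul_of_nonneg_left (hM _) (tent_nonneg _ _ _)
    _ = (tent (ι (p y)) r y + tent (ι (p y')) r y') * M := by ring
    _ ≤ dist y y' / r * M := by
        gcongr
        exact tent_add_tent_le hr (by linarith [hsep _ _ hpp, hr_def]) (hp_ne hpp) (hp_ne hpp.symm)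

end Extension

theorem aeConst_le_of_separated_of_bounded (X : Type) [MetricSpace X] [Nonempty X] {s D : ℝ}
    (hs : 0 < s) (hsep : ∀ x x' : X, x ≠ x' → s ≤ dist x x') (hD : ∀ x x' : X, dist x x' ≤ D) :
    aeConst X ≤ 2 * (1 - (ENat.card X : ℝ≥0∞)⁻¹).toReal * D / s := by
  have hD0 : 0 ≤ D := dist_nonneg.trans (hD (Classical.arbitrary X) (Classical.arbitrary X))
  refine csInf_le ⟨0, fun _ hK => hK.1⟩ ⟨by positivity, fun Y _ ι hι E _ _ _ f hf => ?_⟩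
  have hL := lipschitzWith_lipConst hf
  obtain ⟨c, hc⟩ := exists_center_norm_sub_le f (R := lipConst f * D) fun x x' => by
    rw [← dist_eq_norm]
    exact (hL.dist_le_mul x x').trans (by gcongr; exact hD x x')
  obtain ⟨g, hgι, hg⟩ := exists_lipschitzWith_extension_of_separated ι hs
    (fun x x' hne => (hι.dist_eq x x').symm ▸ hsep x x' hne) f c hc
  refine ⟨g, hgι, hg.weaken (le_of_eq ?_)⟩
  ext
  rw [NNReal.coe_mul, Real.coe_toNNReal _ (by positivity), Real.coe_toNNReal _ (by positivity)]
  ring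

open ENNReal in
/-- for every metric space `X` with at least two points,
`ae(X) ≤ 2·(1 − 1/|X|)·(diam X)/(sep X)`, with the conventions `a/0 = ∞`, `a/∞ = 0`
(the inequality is stated in `ℝ≥0∞`). -/
theorem aeConst_le_diam_div_sep (X : Type) [MetricSpace X] (h : ∃ x y : X, x ≠ y) :
    ENNReal.ofReal (aeConst X) ≤
      2 * (1 - ((ENat.card X : ℝ≥0∞))⁻¹) *
        (EMetric.diam (Set.univ : Set X) / (Set.univ : Set X).einfsep) := by
  obtain ⟨p, q, hpq⟩ := h
  have : Nontrivial X := ⟨p, q, hpq⟩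
  set s := (Set.univ : Set X).einfsep
  set D := EMetric.diam (Set.univ : Set X)
  set β := 1 - (ENat.card X : ℝ≥0∞)⁻¹
  have hβ0 : β ≠ 0 := by
    have h1 : (1 : ℝ≥0∞) < ENat.card X := by
      exact_mod_cast (ENat.one_lt_card_iff_nontrivial X).2 ‹_›
    exact (tsub_pos_of_lt (ENNReal.inv_lt_one.2 h1)).ne'
  by_cases hDs : D / s = ⊤
  · rw [hDs, ENNReal.mul_top (mul_ne_zero two_ne_zero hβ0)]
    exact le_top
  have hs_top : s ≠ ⊤ := Set.nontrivial_univ.einfsep_ne_top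
  have hD0 : D ≠ 0 := (Metric.ediam_pos_iff.2 Set.nontrivial_univ).ne'
  obtain ⟨hs0, hD_top⟩ : s ≠ 0 ∧ D ≠ ⊤ := by
    rw [ENNReal.div_eq_top] at hDs
    tauto
  have key := aeConst_le_of_separated_of_bounded X (ENNReal.toReal_pos hs0 hs_top)
    (fun x x' hne => Set.infsep_le_dist_of_mem (Set.mem_univ x) (Set.mem_univ x') hne)
    (fun x x' => Metric.dist_le_diam_of_mem' hD_top (Set.mem_univ x) (Set.mem_univ x'))
  calc ENNReal.ofReal (aeConst X) ≤ ENNReal.ofReal (2 * β.toReal * D.toReal / s.toReal) :=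
        ENNReal.ofReal_le_ofReal key
    _ = 2 * β * (D / s) := by
        rw [mul_div_assoc, ← ENNReal.toReal_div, ← ENNReal.toReal_ofNat 2,
          ← ENNReal.toReal_mul, ← ENNReal.toReal_mul, ENNReal.ofReal_toReal]
        exact ENNReal.mul_ne_top (ENNReal.mul_ne_top ofNat_ne_top
          (tsub_le_self.trans_lt one_lt_top).ne) hDs
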